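/- The Vapnik–Chervonenkis (VC) dimension of the class of all d-dimensional ellipsoids in ℝ^d equals (d² + 3d)/2, for every positive integer d. -/

import Mathlib

open Matrix

/-- A class `C` of subsets of `α` shatters a set `X` if every subset of `X`
is cut out of `X` by some member of `C`. -/
def Shatters {α : Type*} (C : Set (Set α)) (X : Set α) : Prop :=
  ∀ Y ⊆ X, ∃ B ∈ C, Y = X ∩ B

/-- The VC dimension of a class `C` of subsets: the supremum (in `ℕ∞`) of the
cardinalities of finite sets shattered by `C`. -/
noncomputable def vcDim {α : Type*} (C : Set (Set α)) : ℕ∞ :=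
  ⨆ (X : Finset α) (_ : Shatters C (X : Set α)), (X.card : ℕ∞)

/-- A `d`-dimensional ellipsoid: `{x ∈ ℝ^d : (x-μ)ᵀ A (x-μ) < 1}` for a center
`μ ∈ ℝ^d` and a (symmetric) positive definite matrix `A`. -/
def IsEllipsoid {d : ℕ} (E : Set (Fin d → ℝ)) : Prop :=
  ∃ (μ : Fin d → ℝ) (A : Matrix (Fin d) (Fin d) ℝ), A.PosDef ∧
    E = {x | (x - μ) ⬝ᵥ A.mulVec (x - μ) < 1}

/-!
Upper bound: an ellipsoid is `{f < 0}` for `f x = (x - μ)ᵀ A (x - μ) - 1`, which lies in the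
`(d² + 3d)/2 + 1`-dimensional space of quadratic polynomials and has positive second difference
along a coordinate vector. If a set `X` of that many points were shattered, the evaluations at the
points of `X` and the second difference would be linearly dependent functionals on that space;
realising the two sign patterns of the coefficients of the relation contradicts it.

Lower bound: the `(d² + 3d)/2` points `±eᵢ`, `eᵢ - eⱼ` (`i < j`) lie on the ellipsoid
`|x|² + (∑ xᵢ)² = 2`, and quadratic polynomials take arbitrary values on them. Adding a small
multiple of such an interpolant to `|x|² + (∑ xᵢ)² - 2` keeps it positive definite, so its
negative set is an ellipsoid picking out exactly the points where the prescribed value is negative.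
-/

open Module

section VCDimension

variable {α : Type*} {C : Set (Set α)}

theorem Shatters.mono {C' : Set (Set α)} {X : Set α} (h : Shatters C X) (hC : C ⊆ C') :
    Shatters C' X := fun Y hY =>
  let ⟨B, hB, hYB⟩ := h Y hY
  ⟨B, hC hB, hYB⟩

theorem vcDim_le {n : ℕ} (h : ∀ X : Finset α, Shatters C X → X.card ≤ n) : vcDim C ≤ n :=
  iSup₂_le fun X hX => by exact_mod_cast h X hX

theorem le_vcDim_of_forall_exists_preimage_eq {ι : Type*} [Fintype ι] (p : ι → α)
    (h : ∀ S : Set ι, ∃ B ∈ C, p ⁻¹' B = S) : (Fintype.card ι : ℕ∞) ≤ vcDim C := by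
  classical
  have hp : Function.Injective p := fun a a' haa' => by
    obtain ⟨B, -, hB⟩ := h {a}
    have : a' ∈ p ⁻¹' B := by rw [Set.mem_preimage, ← haa', ← Set.mem_preimage, hB]; rfl
    rw [hB] at this
    exact this.symm
  have hX : Shatters C (Finset.univ.image p : Set α) := by
    intro Y hY
    obtain ⟨B, hB, hpB⟩ := h (p ⁻¹' Y)
    refine ⟨B, hB, Set.ext fun x => ?_⟩
    constructor
    · intro hx
      obtain ⟨k, -, rfl⟩ := Finset.mem_image.1 (hY hx)
      exact ⟨Finset.mem_image_of_mem p (Finset.mem_univ k), (Set.ext_iff.1 hpB k).2 hx⟩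
    · rintro ⟨hx, hxB⟩
      obtain ⟨k, -, rfl⟩ := Finset.mem_image.1 hx
      exact (Set.ext_iff.1 hpB k).1 hxB
  calc (Fintype.card ι : ℕ∞) = (Finset.univ.image p).card := by
        rw [Finset.card_image_of_injective _ hp, Finset.card_univ]
    _ ≤ vcDim C := le_iSup₂ (f := fun (X : Finset α) (_ : Shatters C X) => (X.card : ℕ∞)) _ hX

end VCDimension

section Dudley

variable {α 𝕜 : Type*} [Field 𝕜] [LinearOrder 𝕜] [IsStrictOrderedRing 𝕜]

theorem Shatters.nonpos_of_forall_mul_add_sum_eq_zero {𝓕 : Set (α → 𝕜)} {ℓ : (α → 𝕜) → 𝕜}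
    {X : Finset α} (hX : Shatters {B | ∃ f ∈ 𝓕, 0 < ℓ f ∧ B = {x | f x < 0}} X)
    {β : 𝕜} {γ : X → 𝕜} (h : ∀ f ∈ 𝓕, β * ℓ f + ∑ x, γ x * f x = 0) :
    β ≤ 0 ∧ (β = 0 → ∀ x, 0 ≤ γ x) := by
  obtain ⟨B, ⟨f, hf, hℓf, rfl⟩, hY⟩ :=
    hX (Subtype.val '' {x | γ x < 0}) (by rintro _ ⟨x, -, rfl⟩; exact x.2)
  have hsign : ∀ x : X, γ x < 0 ↔ f x < 0 := fun x => by
    simpa [Subtype.val_injective.mem_set_image, x.2] using congrArg (x.1 ∈ ·) hY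
  have hterm : ∀ x : X, 0 ≤ γ x * f x := fun x => by
    by_cases hx : γ x < 0
    · exact mul_nonneg_of_nonpos_of_nonpos hx.le ((hsign x).1 hx).le
    · exact mul_nonneg (not_lt.1 hx) (not_lt.1 (mt (hsign x).2 hx))
  have hsum := h f hf
  have hβ : β * ℓ f ≤ 0 := by
    linarith [Finset.sum_nonneg fun x (_ : x ∈ Finset.univ) => hterm x]
  refine ⟨nonpos_of_mul_nonpos_left hβ hℓf, fun hβ0 x => not_lt.1 fun hx => ?_⟩
  subst hβ0
  have := (Finset.sum_eq_zero_iff_of_nonneg fun x _ => hterm x).1 (by simpa using hsum) x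
    (Finset.mem_univ x)
  exact (mul_pos_of_neg_of_neg hx ((hsign x).1 hx)).ne' this

theorem Shatters.card_lt_finrank {F : Submodule 𝕜 (α → 𝕜)} [FiniteDimensional 𝕜 F]
    {ℓ : (α → 𝕜) →ₗ[𝕜] 𝕜} {X : Finset α}
    (hX : Shatters {B | ∃ f ∈ F, 0 < ℓ f ∧ B = {x | f x < 0}} X) : X.card < finrank 𝕜 F := by
  by_contra! hcard
  let v : Option X → Dual 𝕜 F := fun o =>
    o.elim (ℓ.comp F.subtype) fun x =>
      (LinearMap.proj (R := 𝕜) (φ := fun _ => 𝕜) x.1).comp F.subtype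
  have hdep : ¬ LinearIndependent 𝕜 v := fun hv => by
    have := hv.fintype_card_le_finrank
    rw [Subspace.dual_finrank_eq, Fintype.card_option, Fintype.card_coe] at this
    omega
  obtain ⟨g, hg, o, ho⟩ := Fintype.not_linearIndependent_iff.1 hdep
  have hrel : ∀ f ∈ F, g none * ℓ f + ∑ x : X, g (some x) * f x = 0 := fun f hf => by
    simpa [v, Fintype.sum_option] using congrArg (fun φ : Dual 𝕜 F => φ ⟨f, hf⟩) hg
  obtain ⟨hpos, hγpos⟩ := hX.nonpos_of_forall_mul_add_sum_eq_zero hrel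
  obtain ⟨hneg, hγneg⟩ := hX.nonpos_of_forall_mul_add_sum_eq_zero (β := -g none)
    (γ := fun x => -g (some x)) fun f hf => by
      simp only [neg_mul, Finset.sum_neg_distrib]; linarith [hrel f hf]
  have hβ : g none = 0 := by linarith
  cases o with
  | none => exact ho hβ
  | some x =>
    exact ho (le_antisymm (by simpa using hγneg (by simp [hβ]) x) (hγpos hβ x))

end Dudley

section QuadraticForm

lemma dotProduct_mulVec_parallelogram {n : Type*} [Fintype n] (A : Matrix n n ℝ) (u v : n → ℝ) :
    (u + v) ⬝ᵥ A *ᵥ (u + v) + (u - v) ⬝ᵥ A *ᵥ (u - v) =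
      2 * (u ⬝ᵥ A *ᵥ u) + 2 * (v ⬝ᵥ A *ᵥ v) := by
  simp only [mulVec_add, mulVec_sub, add_dotProduct, sub_dotProduct, dotProduct_add,
    dotProduct_sub]
  ring

lemma abs_dotProduct_mulVec_le {n : Type*} [Fintype n] (A : Matrix n n ℝ) (x : n → ℝ) :
    |x ⬝ᵥ A *ᵥ x| ≤ (∑ i, ∑ j, |A i j|) * (x ⬝ᵥ x) := by
  have hsq : ∀ i, x i * x i ≤ x ⬝ᵥ x := fun i =>
    Finset.single_le_sum (f := fun j => x j * x j) (fun j _ => mul_self_nonneg _)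
      (Finset.mem_univ i)
  have hprod : ∀ i j, |x i * x j| ≤ x ⬝ᵥ x := fun i j =>
    abs_le.2 ⟨by nlinarith [hsq i, hsq j], by nlinarith [hsq i, hsq j]⟩
  calc |x ⬝ᵥ A *ᵥ x| = |∑ i, ∑ j, A i j * (x i * x j)| := by
        simp only [dotProduct, mulVec, Finset.mul_sum]
        congr 1
        exact Finset.sum_congr rfl fun i _ => Finset.sum_congr rfl fun j _ => by ring
    _ ≤ ∑ i, ∑ j, |A i j| * |x i * x j| :=
        (Finset.abs_sum_le_sum_abs _ _).trans <| Finset.sum_le_sum fun i _ =>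
          (Finset.abs_sum_le_sum_abs _ _).trans_eq (by simp only [abs_mul])
    _ ≤ ∑ i, ∑ j, |A i j| * (x ⬝ᵥ x) := by gcongr with i _ j _; exact hprod i j
    _ = (∑ i, ∑ j, |A i j|) * (x ⬝ᵥ x) := by simp only [Finset.sum_mul]

lemma isEllipsoid_setOf_lt_zero {d : ℕ} {A : Matrix (Fin d) (Fin d) ℝ} (hA : A.PosDef)
    (b : Fin d → ℝ) (c : ℝ) {x₀ : Fin d → ℝ} (hx₀ : x₀ ⬝ᵥ A *ᵥ x₀ + b ⬝ᵥ x₀ + c < 0) :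
    IsEllipsoid {x | x ⬝ᵥ A *ᵥ x + b ⬝ᵥ x + c < 0} := by
  set μ : Fin d → ℝ := -(1 / 2 : ℝ) • A⁻¹ *ᵥ b
  have hAμ : A *ᵥ μ = -(1 / 2 : ℝ) • b := by
    rw [mulVec_smul, mulVec_mulVec, mul_nonsing_inv _ ((isUnit_iff_isUnit_det A).1 hA.isUnit),
      one_mulVec]
  have hsymm : ∀ x, μ ⬝ᵥ A *ᵥ x = x ⬝ᵥ A *ᵥ μ := fun x => by
    rw [dotProduct_mulVec, ← mulVec_transpose, (isHermitian_iff_isSymm.1 hA.1).eq, dotProduct_comm]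
  set m := μ ⬝ᵥ A *ᵥ μ - c
  have hsq : ∀ x, x ⬝ᵥ A *ᵥ x + b ⬝ᵥ x + c = (x - μ) ⬝ᵥ A *ᵥ (x - μ) - m := fun x => by
    simp only [m, mulVec_sub, dotProduct_sub, sub_dotProduct, hsymm x, hAμ, dotProduct_smul,
      smul_eq_mul, dotProduct_comm x b]
    ring
  have hm : 0 < m := by
    have := hA.posSemidef.dotProduct_mulVec_nonneg (x₀ - μ)
    simp only [star_trivial] at this
    linarith [hsq x₀]
  refine ⟨μ, m⁻¹ • A, hA.smul (inv_pos.2 hm), ?_⟩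
  ext x
  simp only [Set.mem_ofPred_eq, hsq, smul_mulVec, dotProduct_smul, smul_eq_mul,
    inv_mul_lt_one₀ hm, sub_neg]

end QuadraticForm

lemma sq_add_three_mul_div_two (d : ℕ) : (d ^ 2 + 3 * d) / 2 = d.choose 2 + 2 * d := by
  rw [Nat.choose_two_right, show d ^ 2 + 3 * d = d * (d - 1) + 2 * (2 * d) by
    cases d with
    | zero => rfl
    | succ n => simp only [pow_two, add_tsub_cancel_right]; ring]
  omega

section Quadratic

variable {d : ℕ}

def quadMonomial (d : ℕ) : Sym2 (Fin d) ⊕ Fin d ⊕ Unit → (Fin d → ℝ) → ℝ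
  | .inl s, x => Sym2.lift ⟨fun i j => x i * x j, fun _ _ => mul_comm _ _⟩ s
  | .inr (.inl i), x => x i
  | .inr (.inr _), _ => 1

def quadraticFunctions (d : ℕ) : Submodule ℝ ((Fin d → ℝ) → ℝ) :=
  Submodule.span ℝ (Set.range (quadMonomial d))

lemma quadMonomial_mem_quadraticFunctions (k : Sym2 (Fin d) ⊕ Fin d ⊕ Unit) :
    quadMonomial d k ∈ quadraticFunctions d :=
  Submodule.subset_span ⟨k, rfl⟩

instance : FiniteDimensional ℝ (quadraticFunctions d) :=
  FiniteDimensional.span_of_finite ℝ (Set.finite_range _)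

lemma finrank_quadraticFunctions_le :
    finrank ℝ (quadraticFunctions d) ≤ (d ^ 2 + 3 * d) / 2 + 1 := by
  refine (finrank_range_le_card _).trans (le_of_eq ?_)
  simp only [Fintype.card_sum, Sym2.card, Fintype.card_fin, Nat.choose_succ_succ',
    Nat.choose_one_right, Fintype.card_unique, sq_add_three_mul_div_two]
  ring

lemma sub_mul_sub_mem_quadraticFunctions (μ : Fin d → ℝ) (i j : Fin d) :
    (fun x : Fin d → ℝ => (x i - μ i) * (x j - μ j)) ∈ quadraticFunctions d := by
  have : (fun x : Fin d → ℝ => (x i - μ i) * (x j - μ j)) =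
      quadMonomial d (.inl s(i, j)) - μ j • quadMonomial d (.inr (.inl i)) -
        μ i • quadMonomial d (.inr (.inl j)) + (μ i * μ j) • quadMonomial d (.inr (.inr ())) := by
    funext x
    simp only [Pi.add_apply, Pi.sub_apply, Pi.smul_apply, smul_eq_mul, quadMonomial, Sym2.lift_mk]
    ring
  rw [this]
  have hmono := quadMonomial_mem_quadraticFunctions (d := d)
  exact add_mem (sub_mem (sub_mem (hmono _) (Submodule.smul_mem _ _ (hmono _)))
    (Submodule.smul_mem _ _ (hmono _))) (Submodule.smul_mem _ _ (hmono _))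

lemma ellipsoid_quadratic_mem_quadraticFunctions (μ : Fin d → ℝ) (A : Matrix (Fin d) (Fin d) ℝ) :
    (fun x => (x - μ) ⬝ᵥ A *ᵥ (x - μ) - 1) ∈ quadraticFunctions d := by
  have : (fun x => (x - μ) ⬝ᵥ A *ᵥ (x - μ) - 1) =
      ∑ i, ∑ j, A i j • (fun x : Fin d → ℝ => (x i - μ i) * (x j - μ j)) -
        quadMonomial d (.inr (.inr ())) := by
    funext x
    simp only [dotProduct, mulVec, Finset.mul_sum, Finset.sum_apply, Pi.sub_apply,
      Pi.smul_apply, smul_eq_mul, quadMonomial]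
    congr 1
    exact Finset.sum_congr rfl fun i _ => Finset.sum_congr rfl fun j _ => by ring
  rw [this]
  exact sub_mem (Submodule.sum_mem _ fun i _ => Submodule.sum_mem _ fun j _ =>
    Submodule.smul_mem _ _ (sub_mul_sub_mem_quadraticFunctions μ i j))
    (quadMonomial_mem_quadraticFunctions _)

def secondDifference {V : Type*} [Zero V] [Neg V] (e : V) : (V → ℝ) →ₗ[ℝ] ℝ :=
  LinearMap.proj (R := ℝ) (φ := fun _ => ℝ) e + LinearMap.proj (-e) - 2 • LinearMap.proj 0

lemma IsEllipsoid.exists_mem_quadraticFunctions {E : Set (Fin d → ℝ)} (hE : IsEllipsoid E)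
    (i : Fin d) : ∃ f ∈ quadraticFunctions d,
      0 < secondDifference (Pi.single i 1) f ∧ E = {x | f x < 0} := by
  obtain ⟨μ, A, hA, rfl⟩ := hE
  refine ⟨_, ellipsoid_quadratic_mem_quadraticFunctions μ A, ?_, by ext; simp⟩
  have h := dotProduct_mulVec_parallelogram A (-μ) (Pi.single i 1)
  rw [single_one_dotProduct, mulVec_single_one, col_apply] at h
  simp only [secondDifference, LinearMap.sub_apply, LinearMap.add_apply, LinearMap.smul_apply,
    LinearMap.proj_apply, zero_sub, nsmul_eq_mul, Nat.cast_ofNat]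
  rw [sub_eq_neg_add (Pi.single i 1), neg_sub_comm (Pi.single i 1)]
  linarith [hA.diag_pos (i := i)]

end Quadratic

section TestPoints

variable {d : ℕ}

abbrev TestIndex (d : ℕ) := Fin d ⊕ Fin d ⊕ {p : Fin d × Fin d // p.1 < p.2}

def testPoint : TestIndex d → Fin d → ℝ
  | .inl i => Pi.single i 1
  | .inr (.inl i) => -Pi.single i 1
  | .inr (.inr p) => Pi.single p.1.1 1 - Pi.single p.1.2 1

lemma card_testIndex : Fintype.card (TestIndex d) = (d ^ 2 + 3 * d) / 2 := by
  simp only [Fintype.card_sum, Fintype.card_fin, Fintype.card_subtype,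
    Fintype.card_product_filter_lt, sq_add_three_mul_div_two]
  ring

lemma testPoint_dotProduct_self_add_sq_sum (k : TestIndex d) :
    testPoint k ⬝ᵥ testPoint k + (∑ i, testPoint k i) ^ 2 = 2 := by
  rcases k with i | i | ⟨⟨i, j⟩, hij : i < j⟩
  · norm_num [testPoint]
  · norm_num [testPoint]
  · norm_num [testPoint, Finset.sum_sub_distrib, dotProduct_sub, hij.ne, hij.ne']

lemma exists_interpolating_quadratic (t : TestIndex d → ℝ) :
    ∃ A : Matrix (Fin d) (Fin d) ℝ, A.IsSymm ∧ ∃ b : Fin d → ℝ,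
      ∀ k, testPoint k ⬝ᵥ A *ᵥ testPoint k + b ⬝ᵥ testPoint k = t k := by
  let g : Fin d → Fin d → ℝ := fun i j =>
    if h : i < j then (t (.inl i) + t (.inr (.inl j)) - t (.inr (.inr ⟨(i, j), h⟩))) / 2 else 0
  -- at most one of `g i j`, `g j i` is nonzero
  let A : Matrix (Fin d) (Fin d) ℝ := fun i j =>
    if i = j then (t (.inl i) + t (.inr (.inl i))) / 2 else g i j + g j i
  refine ⟨A, ?_, fun i => (t (.inl i) - t (.inr (.inl i))) / 2, ?_⟩
  · refine IsSymm.ext fun i j => ?_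
    by_cases h : i = j
    · subst h; rfl
    · simp only [A, if_neg h, if_neg (Ne.symm h)]
      exact add_comm _ _
  · intro k
    rcases k with i | i | ⟨⟨i, j⟩, hij : i < j⟩ <;>
      simp only [testPoint, mulVec_neg, mulVec_sub, dotProduct_neg, neg_dotProduct,
        dotProduct_sub, sub_dotProduct, single_one_dotProduct, mulVec_single_one, col_apply,
        dotProduct_single_one]
    · simp only [A, if_pos rfl]; ring
    · simp only [A, if_pos rfl, neg_neg]; ring
    · simp only [A, g, if_pos rfl, if_neg hij.ne, if_neg hij.ne', dif_pos hij, dif_neg hij.not_gt,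
        add_zero, zero_add]
      ring

lemma exists_isEllipsoid_testPoint_mem_iff (t : TestIndex d → ℝ) :
    ∃ E, IsEllipsoid E ∧ ∀ k, testPoint k ∈ E ↔ t k < 0 := by
  obtain ⟨A, hA, b, hAb⟩ := exists_interpolating_quadratic t
  set C := ∑ i, ∑ j, |A i j|
  set ε : ℝ := (C + 1)⁻¹
  have hε : 0 < ε := by positivity
  have hεC : ε * C < 1 := by
    rw [inv_mul_lt_one₀ (by positivity)]
    linarith
  let J : Matrix (Fin d) (Fin d) ℝ := of fun _ _ => 1
  have hJ : ∀ x, x ⬝ᵥ J *ᵥ x = (∑ i, x i) ^ 2 := fun x => by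
    simp [J, dotProduct, mulVec, sq, Finset.sum_mul]
  have hM : (1 + J + ε • A).PosDef := by
    refine .of_dotProduct_mulVec_pos (isHermitian_iff_isSymm.2 <|
      (isSymm_one.add (IsSymm.ext fun _ _ => rfl)).add (hA.smul ε)) fun x hx => ?_
    have hxx := dotProduct_star_self_pos_iff.2 hx
    simp only [star_trivial] at hxx ⊢
    simp only [add_mulVec, one_mulVec, dotProduct_add, smul_mulVec, dotProduct_smul, hJ,
      smul_eq_mul]
    nlinarith [abs_le.1 (abs_dotProduct_mulVec_le A x), sq_nonneg (∑ i, x i)]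
  refine ⟨_, isEllipsoid_setOf_lt_zero hM (ε • b) (-2) (x₀ := 0) (by simp), fun k => ?_⟩
  have hq : testPoint k ⬝ᵥ (1 + J + ε • A) *ᵥ testPoint k + (ε • b) ⬝ᵥ testPoint k + -2 =
      ε * t k := by
    simp only [add_mulVec, one_mulVec, dotProduct_add, smul_mulVec, dotProduct_smul, hJ,
      smul_dotProduct, smul_eq_mul, ← hAb k]
    linarith [testPoint_dotProduct_self_add_sq_sum k]
  rw [Set.mem_ofPred_eq, hq]
  exact ⟨fun h => by nlinarith, mul_neg_of_pos_of_neg hε⟩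

end TestPoints

theorem vcDim_ellipsoids (d : ℕ) (hd : 0 < d) :
    vcDim {E : Set (Fin d → ℝ) | IsEllipsoid E} = ((d ^ 2 + 3 * d) / 2 : ℕ) := by
  refine le_antisymm (vcDim_le fun X hX => ?_) ?_
  · have := (hX.mono fun E hE => hE.exists_mem_quadraticFunctions ⟨0, hd⟩).card_lt_finrank
    have := finrank_quadraticFunctions_le (d := d)
    omega
  · rw [← card_testIndex]
    refine le_vcDim_of_forall_exists_preimage_eq testPoint fun S => ?_
    classical
    obtain ⟨E, hE, hmem⟩ :=
      exists_isEllipsoid_testPoint_mem_iff fun k => if k ∈ S then -1 else 1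
    exact ⟨E, hE, Set.ext fun k => by by_cases hk : k ∈ S <;> simp [hmem, hk]⟩
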